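/- Let A(x) ∈ M_{d×d}(ℤ[x]) and let w ∈ ℤ^d be nonzero such that the entries of the row vector wᵗ(A(x) − A(0)) are ℤ-linearly independent polynomials. Then for all a ∈ ℤ^d and positive integers q with gcd(a₁,…,a_d,q) = 1, writing wᵗ(A(x) − A(0))·a = ∑_{j=1}^{D} b_j x^j, one has gcd(b₁, …, b_D, q) ≤ d! · (d · ‖A(x) − A(0)‖ · ‖w‖_∞)^d. -/

import Mathlib

/-!
Write `u = wᵗ(A(x) − A(0))`, so `p = ∑ⱼ aⱼ uⱼ`. Linear independence of the `uⱼ` means the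
(infinite) matrix `M` of their coefficients has independent columns, hence some `d` of its rows,
at degrees `s₁, …, s_d`, form a square matrix `N` with `det N ≠ 0`; none of these degrees is `0`,
as `uⱼ(0) = 0`. The coefficients of `p` at the `sₖ` are the entries of `N a`, so the gcd `g` in
question divides `N a`, and by Cramer's rule `g ∣ det N · aⱼ` for all `j`. As `g ∣ q` and
`gcd(a, q) = 1`, this gives `g ∣ det N`; finally `|det N| ≤ d! cᵈ` for any bound `c` on the
coefficients of the `uⱼ`, such as `c = d ‖A − A(0)‖ ‖w‖_∞`.
-/

open Polynomial Matrix

namespace Matrix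

variable {K R ι n : Type*} [Fintype n] [DecidableEq n]

theorem span_row_eq_top_of_linearIndependent_col [Field K] {M : Matrix ι n K}
    (hM : LinearIndependent K M.col) : Submodule.span K (Set.range M.row) = ⊤ := by
  by_contra hne
  obtain ⟨φ, hφ, hφW⟩ := Submodule.exists_dual_map_eq_bot_of_lt_top (lt_top_iff_ne_top.mpr hne)
    inferInstance
  have hc : ∑ j, (φ fun k => if j = k then 1 else 0) • M.col j = 0 := by
    ext i
    have hi : φ (M.row i) ∈ (Submodule.span K (Set.range M.row)).map φ :=
      Submodule.mem_map_of_mem (Submodule.subset_span ⟨i, rfl⟩)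
    rw [hφW, Submodule.mem_bot, φ.pi_apply_eq_sum_univ] at hi
    simpa [Finset.sum_apply, col_apply, row_apply, mul_comm] using hi
  have hc0 := Fintype.linearIndependent_iff.mp hM _ hc
  exact hφ (LinearMap.ext fun x => by simp [φ.pi_apply_eq_sum_univ x, hc0])

theorem exists_det_submatrix_ne_zero_of_linearIndependent_col [Field K] {M : Matrix ι n K}
    (hM : LinearIndependent K M.col) : ∃ s : n → ι, (M.submatrix s id).det ≠ 0 := by
  obtain ⟨κ, a, -, hspan, hli⟩ := exists_linearIndependent' K M.row
  rw [span_row_eq_top_of_linearIndependent_col hM] at hspan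
  let e : κ ≃ n := (Module.Basis.mk hli hspan.ge).indexEquiv (Pi.basisFun K n)
  refine ⟨a ∘ e.symm, ?_⟩
  rw [← isUnit_iff_ne_zero, ← isUnit_iff_isUnit_det, ← linearIndependent_rows_iff_isUnit]
  exact hli.comp _ e.symm.injective

theorem exists_det_submatrix_ne_zero_of_linearIndependent_col' [CommRing R] [IsDomain R]
    {M : Matrix ι n R} (hM : LinearIndependent R M.col) :
    ∃ s : n → ι, (M.submatrix s id).det ≠ 0 := by
  let K := FractionRing R
  have hinj : Function.Injective (algebraMap R K) := IsFractionRing.injective R K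
  have hMK : LinearIndependent K (M.map (algebraMap R K)).col := by
    rw [← LinearIndependent.iff_fractionRing R K]
    exact hM.map' (LinearMap.compLeft (Algebra.linearMap R K) ι)
      (LinearMap.ker_eq_bot.mpr fun x y h => funext fun i => hinj (congrFun h i))
  obtain ⟨s, hs⟩ := exists_det_submatrix_ne_zero_of_linearIndependent_col hMK
  refine ⟨s, fun h => hs ?_⟩
  rw [submatrix_map, ← RingHom.mapMatrix_apply, ← RingHom.map_det, h, map_zero]

theorem dvd_det_mul_of_forall_dvd_mulVec [CommRing R] (N : Matrix n n R) {a : n → R} {g : R}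
    (h : ∀ k, g ∣ (N *ᵥ a) k) (j : n) : g ∣ N.det * a j := by
  have hcramer : N.det • a = N.adjugate *ᵥ (N *ᵥ a) := by
    rw [mulVec_mulVec, adjugate_mul, smul_mulVec, one_mulVec]
  rw [← smul_eq_mul, ← Pi.smul_apply, hcramer]
  exact Finset.dvd_sum fun k _ => dvd_mul_of_dvd_right (h k) _

theorem natAbs_det_le {N : Matrix n n ℤ} {c : ℕ} (h : ∀ i j, (N i j).natAbs ≤ c) :
    N.det.natAbs ≤ (Fintype.card n).factorial * c ^ Fintype.card n := by
  have := det_le (abv := AbsoluteValue.abs) (x := (c : ℤ)) fun i j => by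
    rw [AbsoluteValue.abs_apply, Int.abs_eq_natAbs]; exact_mod_cast h i j
  rw [AbsoluteValue.abs_apply, Int.abs_eq_natAbs, nsmul_eq_mul] at this
  exact_mod_cast this

end Matrix

theorem Nat.dvd_of_forall_dvd_mul_of_gcd_eq_one {ι : Type*} {s : Finset ι} {a : ι → ℕ}
    {g D q : ℕ} (hgq : g ∣ q) (h : ∀ i ∈ s, g ∣ D * a i) (hcop : Nat.gcd (s.gcd a) q = 1) :
    g ∣ D := by
  have hgcd : g ∣ D * s.gcd a := by
    rw [← normalize_eq D, ← Finset.gcd_mul_left]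
    exact Finset.dvd_gcd h
  simpa [Nat.gcd_mul_left, hcop] using Nat.dvd_gcd hgcd (dvd_mul_of_dvd_right hgq D)

namespace Polynomial

theorem natAbs_coeff_le_sup_support (p : ℤ[X]) (n : ℕ) :
    (p.coeff n).natAbs ≤ p.support.sup fun k => (p.coeff k).natAbs := by
  by_cases hn : n ∈ p.support
  · exact Finset.le_sup (f := fun k => (p.coeff k).natAbs) hn
  · simp [notMem_support_iff.mp hn]

theorem gcd_coeff_Icc_dvd_coeff (p : ℤ[X]) (q : ℕ) {m : ℕ} (hm : m ≠ 0) :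
    Nat.gcd ((Finset.Icc 1 p.natDegree).gcd fun j => (p.coeff j).natAbs) q
      ∣ (p.coeff m).natAbs := by
  rcases le_or_gt m p.natDegree with hmd | hmd
  · exact (Nat.gcd_dvd_left _ _).trans
      (Finset.gcd_dvd (Finset.mem_Icc.mpr ⟨Nat.one_le_iff_ne_zero.mpr hm, hmd⟩))
  · simp [coeff_eq_zero_of_natDegree_lt hmd]

theorem coeff_vecMul_C {ι n : Type*} [Fintype ι] (w : ι → ℤ) (B : Matrix ι n ℤ[X]) (j : n)
    (k : ℕ) : (vecMul (fun i => C (w i)) B j).coeff k = ∑ i, w i * (B i j).coeff k := by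
  simp [vecMul, dotProduct]

theorem natAbs_coeff_vecMul_C_le {ι n : Type*} [Fintype ι] {w : ι → ℤ} {B : Matrix ι n ℤ[X]}
    {b W : ℕ} (hB : ∀ i j k, ((B i j).coeff k).natAbs ≤ b) (hw : ∀ i, (w i).natAbs ≤ W)
    (j : n) (k : ℕ) :
    ((vecMul (fun i => C (w i)) B j).coeff k).natAbs ≤ Fintype.card ι * b * W := by
  rw [coeff_vecMul_C]
  calc (∑ i, w i * (B i j).coeff k).natAbs
      ≤ ∑ i, (w i * (B i j).coeff k).natAbs := Int.natAbs_sum_le _ _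
    _ ≤ ∑ _i : ι, b * W := Finset.sum_le_sum fun i _ => by
        rw [Int.natAbs_mul, mul_comm]; exact Nat.mul_le_mul (hB i j k) (hw i)
    _ = Fintype.card ι * b * W := by simp [mul_assoc]

theorem coeff_zero_sub_C_eval_zero (p : ℤ[X]) : (p - C (p.eval 0)).coeff 0 = 0 := by
  simp [coeff_zero_eq_eval_zero]

end Polynomial

theorem gcd_coeff_dotProduct_C_le {n : Type*} [Fintype n] {u : n → ℤ[X]}
    (hli : LinearIndependent ℤ u) (h0 : ∀ j, (u j).coeff 0 = 0) {c : ℕ}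
    (hc : ∀ j k, ((u j).coeff k).natAbs ≤ c) (a : n → ℤ) (q : ℕ)
    (hgcd : Nat.gcd (Finset.univ.gcd fun i => (a i).natAbs) q = 1) :
    letI p := u ⬝ᵥ fun j => C (a j)
    Nat.gcd ((Finset.Icc 1 p.natDegree).gcd fun j => (p.coeff j).natAbs) q
      ≤ (Fintype.card n).factorial * c ^ Fintype.card n := by
  classical
  set p := u ⬝ᵥ fun j => C (a j)
  let M : Matrix ℕ n ℤ := Matrix.of fun k j => (u j).coeff k
  have hM : LinearIndependent ℤ M.col :=
    hli.map' (LinearMap.pi fun k => lcoeff ℤ k)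
      (LinearMap.ker_eq_bot.mpr fun P Q h => Polynomial.ext fun k => congrFun h k)
  obtain ⟨s, hs⟩ := exists_det_submatrix_ne_zero_of_linearIndependent_col' hM
  set N := M.submatrix s id
  have hs0 : ∀ k, s k ≠ 0 := fun k hk =>
    hs (det_eq_zero_of_row_eq_zero k fun j => by simp [N, M, hk, h0])
  set g := Nat.gcd ((Finset.Icc 1 p.natDegree).gcd fun j => (p.coeff j).natAbs) q
  have hgN : ∀ k, (g : ℤ) ∣ (N *ᵥ a) k := fun k => by
    have hcoeff : (N *ᵥ a) k = p.coeff (s k) := by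
      simp [N, M, p, mulVec, dotProduct]
    rw [hcoeff, Int.natCast_dvd]
    exact p.gcd_coeff_Icc_dvd_coeff q (hs0 k)
  have hgdet : g ∣ N.det.natAbs := by
    refine Nat.dvd_of_forall_dvd_mul_of_gcd_eq_one (Nat.gcd_dvd_right _ _)
      (fun j _ => ?_) hgcd
    rw [← Int.natAbs_mul, ← Int.natCast_dvd]
    exact N.dvd_det_mul_of_forall_dvd_mulVec hgN j
  calc g ≤ N.det.natAbs := Nat.le_of_dvd (Int.natAbs_pos.mpr hs) hgdet
    _ ≤ _ := natAbs_det_le fun i j => hc j (s i)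

theorem stmt_16_general (d : ℕ) (A : Matrix (Fin d) (Fin d) (Polynomial ℤ))
    (w : Fin d → ℤ)
    (hli : LinearIndependent ℤ
      (Matrix.vecMul (fun i => C (w i))
        (A - Matrix.of fun i j => C ((A i j).eval 0))))
    (a : Fin d → ℤ) (q : ℕ)
    (hgcd : Nat.gcd (Finset.univ.gcd fun i => (a i).natAbs) q = 1) :
    letI B : Matrix (Fin d) (Fin d) (Polynomial ℤ) :=
      A - Matrix.of fun i j => C ((A i j).eval 0)
    letI p : Polynomial ℤ :=
      Matrix.vecMul (fun i => C (w i)) B ⬝ᵥ (fun j => C (a j))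
    letI normB : ℕ := Finset.univ.sup fun i => Finset.univ.sup fun j =>
      (B i j).support.sup fun n => ((B i j).coeff n).natAbs
    Nat.gcd (Finset.gcd (Finset.Icc 1 p.natDegree) fun j => (p.coeff j).natAbs) q
      ≤ d.factorial *
        (d * normB * Finset.univ.sup fun i => (w i).natAbs) ^ d := by
  set B : Matrix (Fin d) (Fin d) ℤ[X] := A - Matrix.of fun i j => C ((A i j).eval 0)
  have hB0 : ∀ i j, (B i j).coeff 0 = 0 := fun i j => coeff_zero_sub_C_eval_zero (A i j)
  have hBle : ∀ i j k, ((B i j).coeff k).natAbs ≤ Finset.univ.sup fun i => Finset.univ.sup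
      fun j => (B i j).support.sup fun n => ((B i j).coeff n).natAbs := fun i j k =>
    Finset.le_sup_of_le (b := i) (Finset.mem_univ i) <|
      Finset.le_sup_of_le (b := j) (Finset.mem_univ j) ((B i j).natAbs_coeff_le_sup_support k)
  have hwle : ∀ i, (w i).natAbs ≤ Finset.univ.sup fun i => (w i).natAbs := fun i =>
    Finset.le_sup (f := fun i => (w i).natAbs) (Finset.mem_univ i)
  have hu0 : ∀ j, (vecMul (fun i => C (w i)) B j).coeff 0 = 0 := fun j => by
    simp only [coeff_vecMul_C, hB0, mul_zero, Finset.sum_const_zero]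
  simpa only [Fintype.card_fin] using
    gcd_coeff_dotProduct_C_le hli hu0 (natAbs_coeff_vecMul_C_le hBle hwle) a q hgcd

/-- bounded multiplicative complexity of `wᵗA(x)` when the
entries of `wᵗ(A(x) − A(0))` are `ℤ`-linearly independent. -/
theorem stmt_16 (d : ℕ) (A : Matrix (Fin d) (Fin d) (Polynomial ℤ))
    (w : Fin d → ℤ) (hw : w ≠ 0)
    (hli : LinearIndependent ℤ
      (Matrix.vecMul (fun i => C (w i))
        (A - Matrix.of fun i j => C ((A i j).eval 0))))
    (a : Fin d → ℤ) (q : ℕ) (hq : 0 < q)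
    (hgcd : Nat.gcd (Finset.univ.gcd fun i => (a i).natAbs) q = 1) :
    letI B : Matrix (Fin d) (Fin d) (Polynomial ℤ) :=
      A - Matrix.of fun i j => C ((A i j).eval 0)
    letI p : Polynomial ℤ :=
      Matrix.vecMul (fun i => C (w i)) B ⬝ᵥ (fun j => C (a j))
    letI normB : ℕ := Finset.univ.sup fun i => Finset.univ.sup fun j =>
      (B i j).support.sup fun n => ((B i j).coeff n).natAbs
    Nat.gcd (Finset.gcd (Finset.Icc 1 p.natDegree) fun j => (p.coeff j).natAbs) q
      ≤ d.factorial *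
        (d * normB * Finset.univ.sup fun i => (w i).natAbs) ^ d :=
  stmt_16_general d A w hli a q hgcd
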